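/- arXiv:2010.11406 — 10 statements merged into one kernel-verified Lean document; each statement's English description precedes it below -/
import Mathlib

section
/- Let A be an n×n symmetric matrix of rank r, and S a subset of indices of size r such that the principal submatrix Ã = A[S,S] is nonsingular. Define H to be zero everywhere except that H[S,S] = Ã⁻¹. Then H is symmetric, AHA = A, and HAH = H. -/
/-!
Write `B = A[S,S]` and let `P` be the `n × r` matrix of the columns of the identity indexed by `S`,
so that `AP = A[:,S]`, `PᵀA = A[S,:]`, `PᵀAP = B` and `H = P B⁻¹ Pᵀ`. Symmetry of `H` and
`HAH = P B⁻¹ B B⁻¹ Pᵀ = H` are then formal. For `AHA = A[:,S] B⁻¹ A[S,:] = A`: since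
`rank A = rank B ≤ rank A[:,S] ≤ rank A`, the columns `A[:,S]` span the column space of `A`, so
`A = A[:,S] X` for some `X`; restricting to the rows `S` gives `A[S,:] = B X`, hence
`A[:,S] B⁻¹ A[S,:] = A[:,S] X = A`.
-/

open Matrix

namespace Matrix

abbrev selection (R : Type*) [Zero R] [One R] {n ι : Type*} [DecidableEq n] (f : ι → n) :
    Matrix n ι R :=
  (1 : Matrix n n R).submatrix id f

section Selection

variable {R : Type*} [Semiring R] {m n ι : Type*} [DecidableEq n]

theorem mul_selection [Fintype n] (A : Matrix m n R) (f : ι → n) :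
    A * selection R f = A.submatrix id f := by
  ext i k
  simp [mul_apply, one_apply]

theorem selection_transpose_mul [Fintype n] (A : Matrix n m R) (f : ι → n) :
    (selection R f)ᵀ * A = A.submatrix f id := by
  ext k j
  simp [mul_apply, one_apply]

theorem eq_selection_mul_mul_selection_transpose [Fintype ι] {H : Matrix n n R}
    {M : Matrix ι ι R} {f : ι → n} (hf : Function.Injective f)
    (hblock : ∀ k l, H (f k) (f l) = M k l)
    (hzero : ∀ i j, (i ∉ Set.range f ∨ j ∉ Set.range f) → H i j = 0) :
    H = selection R f * M * (selection R f)ᵀ := by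
  classical
  ext i j
  by_cases hi : i ∈ Set.range f
  · by_cases hj : j ∈ Set.range f
    · obtain ⟨a, rfl⟩ := hi
      obtain ⟨b, rfl⟩ := hj
      simp [mul_apply, one_apply, hf.eq_iff, hblock]
    · have hfj : ∀ k, f k ≠ j := fun k hk => hj ⟨k, hk⟩
      simp [mul_apply, one_apply, hzero i j (Or.inr hj), hfj]
  · have hfi : ∀ k, i ≠ f k := fun k hk => hi ⟨k, hk.symm⟩
    simp [mul_apply, one_apply, hzero i j (Or.inl hi), hfi]

end Selection

theorem exists_eq_mul_of_range_mulVecLin_le {R : Type*} [CommSemiring R] {m n ι : Type*}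
    [Fintype n] [Fintype ι] [DecidableEq n] {A : Matrix m n R} {C : Matrix m ι R}
    (h : LinearMap.range A.mulVecLin ≤ LinearMap.range C.mulVecLin) :
    ∃ X : Matrix ι n R, A = C * X := by
  choose x hx using fun j => h ⟨Pi.single j 1, rfl⟩
  refine ⟨(of x)ᵀ, ext fun i j => ?_⟩
  have hcol := congrFun (hx j) i
  simp only [mulVecLin_apply, mulVec_single_one] at hcol
  exact hcol.symm

section Skeleton

variable {K : Type*} [Field K] {m n ι : Type*} [Fintype n] [Fintype ι] [DecidableEq ι]

theorem range_mulVecLin_submatrix_eq_of_rank_eq (A : Matrix m n K) (g : ι → m) (f : ι → n)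
    (hB : (A.submatrix g f).det ≠ 0) (hrank : A.rank = Fintype.card ι) :
    LinearMap.range (A.submatrix id f).mulVecLin = LinearMap.range A.mulVecLin := by
  classical
  have hle : LinearMap.range (A.submatrix id f).mulVecLin ≤ LinearMap.range A.mulVecLin := by
    rw [← mul_selection, mulVecLin_mul]
    exact LinearMap.range_comp_le_range _ _
  refine Submodule.eq_of_le_of_finrank_eq hle (le_antisymm (Submodule.finrank_mono hle) ?_)
  calc Module.finrank K (LinearMap.range A.mulVecLin) = (A.submatrix g f).rank := by
        rw [rank_of_det_ne_zero hB, ← hrank, rank]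
    _ ≤ (A.submatrix id f).rank := rank_submatrix_le (A.submatrix id f) g id

theorem submatrix_mul_nonsing_inv_mul_submatrix_of_rank_eq (A : Matrix m n K) (g : ι → m)
    (f : ι → n) (hB : (A.submatrix g f).det ≠ 0) (hrank : A.rank = Fintype.card ι) :
    A.submatrix id f * (A.submatrix g f)⁻¹ * A.submatrix g id = A := by
  classical
  obtain ⟨X, hX⟩ := exists_eq_mul_of_range_mulVecLin_le
    (range_mulVecLin_submatrix_eq_of_rank_eq A g f hB hrank).ge
  have hrows : A.submatrix g id = A.submatrix g f * X := by
    conv_lhs => rw [hX]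
    rw [submatrix_mul _ _ g id id Function.bijective_id]
    rfl
  rw [hrows, Matrix.mul_assoc, nonsing_inv_mul_cancel_left _ _ (isUnit_iff_ne_zero.mpr hB), ← hX]

end Skeleton

end Matrix

theorem symmetric_block_construction {n r : ℕ}
    (A : Matrix (Fin n) (Fin n) ℝ) (hA : Aᵀ = A) (hrank : A.rank = r)
    (f : Fin r → Fin n) (hf : Function.Injective f)
    (hdet : (A.submatrix f f).det ≠ 0)
    (H : Matrix (Fin n) (Fin n) ℝ)
    (hHblock : ∀ k l : Fin r, H (f k) (f l) = (A.submatrix f f)⁻¹ k l)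
    (hHzero : ∀ i j : Fin n, (i ∉ Set.range f ∨ j ∉ Set.range f) → H i j = 0) :
    Hᵀ = H ∧ A * H * A = A ∧ H * A * H = H := by
  have hskeleton := submatrix_mul_nonsing_inv_mul_submatrix_of_rank_eq A f f hdet
    (by rw [hrank, Fintype.card_fin])
  rw [← mul_selection, ← selection_transpose_mul] at hskeleton
  set B := A.submatrix f f
  set P := selection ℝ f
  have hH : H = P * B⁻¹ * Pᵀ := eq_selection_mul_mul_selection_transpose hf hHblock hHzero
  have hB : IsUnit B.det := isUnit_iff_ne_zero.mpr hdet
  have hBsymm : Bᵀ = B := by rw [transpose_submatrix, hA]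
  have hPAP : Pᵀ * A * P = B := by
    rw [selection_transpose_mul, mul_selection, submatrix_submatrix]; rfl
  refine ⟨?_, ?_, ?_⟩
  · rw [hH, transpose_mul, transpose_mul, transpose_transpose, transpose_nonsing_inv, hBsymm,
      Matrix.mul_assoc]
  · conv_rhs => rw [← hskeleton]
    simp only [hH, Matrix.mul_assoc]
  · calc H * A * H = P * B⁻¹ * (Pᵀ * A * P) * B⁻¹ * Pᵀ := by
          simp only [hH, Matrix.mul_assoc]
      _ = H := by rw [hPAP, mul_nonsing_inv_cancel_right _ _ hB, hH]
end

section
/- Let A = uuᵀ with u ∈ ℝⁿ nonzero, and let i* be an index maximizing |u_i|. Then H := (1/u_{i*}²) e_{i*} e_{i*}ᵀ satisfies AHA = A, HAH = H, H = Hᵀ, and for every symmetric matrix G with AGA = A one has ‖H‖₁ ≤ ‖G‖₁, where ‖·‖₁ denotes the entrywise 1-norm. -/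
/-!
The identity `uuᵀ G uuᵀ = (uᵀ G u) • uuᵀ` turns `A G A = A` into the scalar condition
`uᵀ G u = 1`. Since `|uᵀ G u| ≤ (max |uᵢ|)² ∑ |G i j|`, every such `G` has entrywise
`1`-norm at least `1 / u_{i*}²`, and `H` has exactly that norm.
-/

open Matrix

namespace Matrix

section CommRing

variable {l m n o R : Type*} [Fintype m] [Fintype n] [CommRing R]

theorem vecMulVec_mul_mul_vecMulVec (u : l → R) (v : m → R) (G : Matrix m n R) (w : n → R)
    (x : o → R) : vecMulVec u v * G * vecMulVec w x = (v ⬝ᵥ G *ᵥ w) • vecMulVec u x := by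
  rw [vecMulVec_mul, vecMulVec_mul_vecMulVec, vecMulVec_smul, dotProduct_mulVec]

theorem dotProduct_vecMulVec_mulVec (x u : m → R) (v y : n → R) :
    x ⬝ᵥ vecMulVec u v *ᵥ y = (x ⬝ᵥ u) * (v ⬝ᵥ y) := by
  simp [vecMulVec_mulVec, dotProduct_smul, mul_comm]

theorem vecMulVec_mul_mul_vecMulVec_self_eq_self_iff [IsDomain R] {u : m → R} (hu : u ≠ 0)
    (G : Matrix m m R) : vecMulVec u u * G * vecMulVec u u = vecMulVec u u ↔ u ⬝ᵥ G *ᵥ u = 1 := by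
  rw [vecMulVec_mul_mul_vecMulVec, ← one_smul R (vecMulVec u u), smul_smul, mul_one]
  exact (smul_left_injective R (by simpa using hu)).eq_iff

end CommRing

section Ordered

variable {m n R : Type*} [Fintype m] [Fintype n] [CommRing R] [LinearOrder R]
  [IsStrictOrderedRing R]

theorem abs_dotProduct_mulVec_le {v : m → R} {w : n → R} {a b : R} (hv : ∀ i, |v i| ≤ a)
    (hw : ∀ j, |w j| ≤ b) (G : Matrix m n R) :
    |v ⬝ᵥ G *ᵥ w| ≤ a * b * ∑ i, ∑ j, |G i j| := by
  calc |v ⬝ᵥ G *ᵥ w| = |∑ i, ∑ j, v i * G i j * w j| := by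
        simp only [dotProduct, mulVec, Finset.mul_sum, mul_assoc]
    _ ≤ ∑ i, ∑ j, |v i * G i j * w j| :=
        (Finset.abs_sum_le_sum_abs _ _).trans
          (Finset.sum_le_sum fun i _ => Finset.abs_sum_le_sum_abs _ _)
    _ ≤ ∑ i, ∑ j, a * b * |G i j| := by
        gcongr with i _ j _
        rw [abs_mul, abs_mul, mul_right_comm]
        exact mul_le_mul_of_nonneg_right
          (mul_le_mul (hv i) (hw j) (abs_nonneg _) ((abs_nonneg _).trans (hv i))) (abs_nonneg _)
    _ = a * b * ∑ i, ∑ j, |G i j| := by simp only [Finset.mul_sum]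

end Ordered

theorem sum_sum_abs_single {m n R : Type*} [Fintype m] [Fintype n] [DecidableEq m] [DecidableEq n]
    [AddCommGroup R] [Lattice R] [AddLeftMono R] (i : m) (j : n) (r : R) :
    ∑ a, ∑ b, |single i j r a b| = |r| := by
  simp [single_apply, apply_ite (abs : R → R), ite_and, Finset.sum_ite_irrel]

end Matrix

theorem rank_one_symmetric_min_norm {n : ℕ}
    (u : Fin n → ℝ) (hu : u ≠ 0)
    (istar : Fin n) (hmax : ∀ i, |u i| ≤ |u istar|)
    (A H : Matrix (Fin n) (Fin n) ℝ)
    (hA : A = vecMulVec u u)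
    (hH : H = (1 / (u istar) ^ 2) • vecMulVec (Pi.single istar 1) (Pi.single istar 1)) :
    A * H * A = A ∧ H * A * H = H ∧ Hᵀ = H ∧
      ∀ G : Matrix (Fin n) (Fin n) ℝ, Gᵀ = G → A * G * A = A →
        ∑ i, ∑ j, |H i j| ≤ ∑ i, ∑ j, |G i j| := by
  have hc : u istar ≠ 0 := by
    contrapose! hu
    funext i
    simpa [hu] using hmax i
  subst hA hH
  set e : Fin n → ℝ := Pi.single istar 1
  have hue : u ⬝ᵥ e = u istar := dotProduct_single_one u istar
  have heu : e ⬝ᵥ u = u istar := single_one_dotProduct istar u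
  refine ⟨?_, ?_, ?_, fun G _ hG => ?_⟩
  · rw [vecMulVec_mul_mul_vecMulVec_self_eq_self_iff hu, smul_mulVec, dotProduct_smul,
      dotProduct_vecMulVec_mulVec, hue, heu, smul_eq_mul]
    field_simp
  · rw [Matrix.smul_mul, Matrix.mul_smul, Matrix.smul_mul, vecMulVec_mul_mul_vecMulVec,
      dotProduct_vecMulVec_mulVec, hue, heu, smul_smul, smul_smul]
    congr 1
    field_simp
  · rw [transpose_smul, transpose_vecMulVec]
  · have hbound := abs_dotProduct_mulVec_le hmax hmax G
    rw [(vecMulVec_mul_mul_vecMulVec_self_eq_self_iff hu G).mp hG, abs_one] at hbound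
    rw [← single_eq_single_vecMulVec_single, smul_single, smul_eq_mul, mul_one,
      sum_sum_abs_single, abs_div, abs_one, abs_pow, div_le_iff₀ (pow_pos (abs_pos.mpr hc) 2)]
    linarith
end

section
/- For a rank-1 matrix A = uuᵀ with u ≠ 0, any matrix H satisfying AHA = A satisfies ‖H‖₁ ≥ 1/‖uuᵀ‖_max, where ‖M‖_max is the largest absolute value of an entry of M. -/
open Matrix

theorem rank_one_norm_lower_bound {n : ℕ}
    (u : Fin n → ℝ) (hu : u ≠ 0)
    (A : Matrix (Fin n) (Fin n) ℝ) (hA : A = vecMulVec u u)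
    (H : Matrix (Fin n) (Fin n) ℝ) (hgi : A * H * A = A) :
    ∑ i, ∑ j, |H i j| ≥ 1 / (⨆ p : Fin n × Fin n, |A p.1 p.2|) := by
  obtain ⟨i, hi⟩ : ∃ i, u i ≠ 0 := by
    by_contra h; push_neg at h; exact hu (funext h)
  set M := ⨆ p : Fin n × Fin n, |A p.1 p.2| with hM
  have hAe : ∀ k l, A k l = u k * u l := by
    intro k l; rw [hA]; rfl
  have hle : ∀ k l, |u k * u l| ≤ M := by
    intro k l
    have h := le_ciSup (f := fun p : Fin n × Fin n => |A p.1 p.2|)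
      (Set.Finite.bddAbove (Set.finite_range _)) (k, l)
    rw [hAe] at h; exact h
  have hMpos : 0 < M :=
    lt_of_lt_of_le (abs_pos.mpr (mul_ne_zero hi hi)) (hle i i)
  have hS : ∑ k, ∑ l, u k * H k l * u l = 1 := by
    have h1 : (A * H * A) i i = A i i := by rw [hgi]
    have h2 : (A * H * A) i i = u i * u i * ∑ k, ∑ l, u k * H k l * u l := by
      simp only [Matrix.mul_apply, hAe, Finset.sum_mul, Finset.mul_sum]
      rw [Finset.sum_comm]
      exact Finset.sum_congr rfl fun k _ => Finset.sum_congr rfl fun l _ => by ring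
    have := h2.symm.trans h1
    rw [hAe i i] at this
    have hne : u i * u i ≠ 0 := mul_ne_zero hi hi
    exact mul_left_cancel₀ hne (this.trans (mul_one _).symm)
  have habs : ∀ k l, |u k * H k l * u l| ≤ M * |H k l| := by
    intro k l
    have : |u k * H k l * u l| = |u k * u l| * |H k l| := by
      rw [← abs_mul]; ring_nf
    rw [this]
    exact mul_le_mul_of_nonneg_right (hle k l) (abs_nonneg _)
  have hbound : (1 : ℝ) ≤ M * ∑ i, ∑ j, |H i j| := by
    calc (1 : ℝ) = |∑ k, ∑ l, u k * H k l * u l| := by rw [hS]; simp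
    _ ≤ ∑ k, |∑ l, u k * H k l * u l| := Finset.abs_sum_le_sum_abs _ _
    _ ≤ ∑ k, ∑ l, |u k * H k l * u l| :=
        Finset.sum_le_sum fun k _ => Finset.abs_sum_le_sum_abs _ _
    _ ≤ ∑ k, ∑ l, M * |H k l| :=
        Finset.sum_le_sum fun k _ => Finset.sum_le_sum fun l _ => habs k l
    _ = M * ∑ i, ∑ j, |H i j| := by simp [Finset.mul_sum]
  rw [ge_iff_le, div_le_iff₀ hMpos]
  linarith [hbound]
end

section
/- Weak duality: for any H ∈ ℝ^{n×m} with AHA = A and any W ∈ ℝ^{m×n} with ‖AᵀWAᵀ‖_max ≤ 1, we have ⟨A, W⟩ ≤ ‖H‖₁, where ⟨X,Y⟩ := trace(XᵀY). -/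
open Matrix

theorem weak_duality {m n : ℕ}
    (A : Matrix (Fin m) (Fin n) ℝ)
    (H : Matrix (Fin n) (Fin m) ℝ) (hgi : A * H * A = A)
    (W : Matrix (Fin m) (Fin n) ℝ)
    (hW : ∀ (i : Fin n) (j : Fin m), |(Aᵀ * W * Aᵀ) i j| ≤ 1) :
    ∑ i, ∑ j, A i j * W i j ≤ ∑ i, ∑ j, |H i j| := by
  have t1 : ∑ i, ∑ j, A i j * W i j = trace (Aᵀ * W) := by
    rw [Finset.sum_comm]
    simp [trace, mul_apply, diag]
  have t2 : ∑ k, ∑ l, H k l * (Aᵀ * W * Aᵀ) k l = trace (Hᵀ * (Aᵀ * W * Aᵀ)) := by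
    rw [Finset.sum_comm]
    simp [trace, mul_apply, diag]
  have key : ∑ i, ∑ j, A i j * W i j = ∑ k, ∑ l, H k l * (Aᵀ * W * Aᵀ) k l := by
    rw [t1, t2]
    conv_lhs => rw [← hgi]
    rw [transpose_mul, transpose_mul]
    conv_rhs => rw [← Matrix.mul_assoc, Matrix.trace_mul_comm]
    congr 1
    simp [Matrix.mul_assoc]
  rw [key]
  calc ∑ k, ∑ l, H k l * (Aᵀ * W * Aᵀ) k l
      ≤ ∑ k, ∑ l, |H k l * (Aᵀ * W * Aᵀ) k l| :=
        Finset.sum_le_sum fun k _ => Finset.sum_le_sum fun l _ => le_abs_self _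
    _ ≤ ∑ k, ∑ l, |H k l| := by
        refine Finset.sum_le_sum fun k _ => Finset.sum_le_sum fun l _ => ?_
        rw [abs_mul]
        calc |H k l| * |(Aᵀ * W * Aᵀ) k l| ≤ |H k l| * 1 :=
              mul_le_mul_of_nonneg_left (hW k l) (abs_nonneg _)
          _ = |H k l| := mul_one _
end

section
/- Weak duality for the ah-symmetric problem: for any H ∈ ℝ^{n×m} with AHA = A and (AH)ᵀ = AH, and any W ∈ ℝ^{m×n} and skew-symmetric U ∈ ℝ^{m×m} with ‖AᵀWAᵀ + AᵀU‖_max ≤ 1, we have ⟨A, W⟩ ≤ ‖H‖₁. -/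
open Matrix

theorem weak_duality_ah_symmetric {m n : ℕ}
    (A : Matrix (Fin m) (Fin n) ℝ)
    (H : Matrix (Fin n) (Fin m) ℝ)
    (hgi : A * H * A = A) (hah : (A * H)ᵀ = A * H)
    (W : Matrix (Fin m) (Fin n) ℝ)
    (U : Matrix (Fin m) (Fin m) ℝ) (hU : Uᵀ = -U)
    (hfeas : ∀ (i : Fin n) (j : Fin m), |(Aᵀ * W * Aᵀ + Aᵀ * U) i j| ≤ 1) :
    ∑ i, ∑ j, A i j * W i j ≤ ∑ i, ∑ j, |H i j| := by
  set X : Matrix (Fin n) (Fin m) ℝ := Aᵀ * W * Aᵀ + Aᵀ * U with hX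
  -- inner products as traces
  have h1 : ∑ i, ∑ j, A i j * W i j = trace (A * Wᵀ) := by
    simp [Matrix.trace, Matrix.mul_apply, Matrix.diag]
  have h2 : ∑ i, ∑ j, H i j * X i j = trace (H * Xᵀ) := by
    simp [Matrix.trace, Matrix.mul_apply, Matrix.diag]
  -- trace (A*H*U) = 0
  have hskew : trace (A * H * U) = 0 := by
    have := Matrix.trace_transpose (A * H * U)
    rw [Matrix.transpose_mul, hU, hah, Matrix.neg_mul, Matrix.trace_neg,
      Matrix.trace_mul_comm] at this
    linarith
  -- key equality
  have key : trace (A * Wᵀ) = trace (H * Xᵀ) := by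
    have : Xᵀ = A * Wᵀ * A + (-U) * A := by
      rw [hX]
      simp [Matrix.transpose_mul, Matrix.transpose_add, hU, Matrix.mul_assoc]
    rw [this, Matrix.mul_add, Matrix.trace_add]
    have e1 : trace (H * (A * Wᵀ * A)) = trace (A * Wᵀ) := by
      rw [show H * (A * Wᵀ * A) = H * (A * Wᵀ) * A by simp [Matrix.mul_assoc],
        Matrix.trace_mul_comm, show A * (H * (A * Wᵀ)) = (A * H * A) * Wᵀ by
          simp [Matrix.mul_assoc], hgi]
    have e2 : trace (H * (-U * A)) = 0 := by
      rw [show H * (-U * A) = H * -U * A by rw [Matrix.mul_assoc], Matrix.trace_mul_comm,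
        show A * (H * -U) = -(A * H * U) by simp [Matrix.mul_assoc], Matrix.trace_neg, hskew,
        neg_zero]
    rw [e1, e2, add_zero]
  rw [h1, key, ← h2]
  apply Finset.sum_le_sum
  intro i _
  apply Finset.sum_le_sum
  intro j _
  calc H i j * X i j ≤ |H i j * X i j| := le_abs_self _
    _ = |H i j| * |X i j| := abs_mul _ _
    _ ≤ |H i j| * 1 := mul_le_mul_of_nonneg_left (hfeas i j) (abs_nonneg _)
    _ = |H i j| := mul_one _
end

section
/- Let A be an n×n symmetric nonnegative matrix of rank 2. Among all 2×2 nonsingular principal submatrices, choose Ã = A[{i₁,i₂}] minimizing ‖Ã⁻¹‖₁, and let H be zero except H[{i₁,i₂},{i₁,i₂}] = Ã⁻¹. Then for every symmetric G with AGA = A, ‖H‖₁ ≤ ‖G‖₁. -/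
/-!
Let `B = A[{i₁, i₂}]` and `K = A[:, {i₁, i₂}] B⁻¹`. Since `rank A = 2`, the columns `i₁, i₂` span
the column space and `A = K B Kᵀ`; in particular row `p` of `K` holds the coordinates `(u, v)` of
column `p` of `A` in those two columns. Any `G` with `AGA = A` satisfies `Kᵀ G K = B⁻¹`, so for
`r = K (1, -1)ᵀ` we get `rᵀ G r = (1, -1) B⁻¹ (1, -1)ᵀ`, whose absolute value is `‖B⁻¹‖₁ = ‖H‖₁`
because the adjugate of a nonnegative symmetric `2 × 2` matrix has the sign pattern of `(1, -1)`.
Comparing `‖B⁻¹‖₁` with the norms for the pairs `{p, i₂}` and `{p, i₁}`, whose determinants are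
`u² det B` and `v² det B`, gives `|r p| = |u - v| ≤ 1` for every `p`, hence `|rᵀ G r| ≤ ‖G‖₁`.
-/

open Matrix

namespace Matrix

variable {m n ι K : Type*} [Fintype n] [Fintype ι] [DecidableEq ι] [Field K]

theorem eq_submatrix_mul_inv_mul_submatrix_of_rank_eq (A : Matrix m n K) (s : ι → m) (t : ι → n)
    (hB : IsUnit (A.submatrix s t).det) (hrank : A.rank = Fintype.card ι) :
    A = A.submatrix id t * (A.submatrix s t)⁻¹ * A.submatrix s id := by
  classical
  set C := A.submatrix id t
  have hCrank : C.rank = Fintype.card ι := by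
    refine le_antisymm (rank_le_card_width C) ?_
    calc Fintype.card ι = (C.submatrix s id).rank :=
          (rank_of_isUnit _ ((isUnit_iff_isUnit_det _).2 hB)).symm
      _ ≤ C.rank := rank_submatrix_le C s id
  have hrange : LinearMap.range A.mulVecLin = LinearMap.range C.mulVecLin := by
    refine (Submodule.eq_of_le_of_finrank_eq ?_ ?_).symm
    · rw [range_mulVecLin, range_mulVecLin]
      exact Submodule.span_mono (Set.range_comp_subset_range t A.col)
    · rw [← rank, ← rank, hCrank, hrank]
  have hcol : ∀ j, ∃ x, C *ᵥ x = A.col j := fun j =>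
    (hrange ▸ ⟨Pi.single j 1, mulVec_single_one A j⟩ : A.col j ∈ LinearMap.range C.mulVecLin)
  choose X hX using hcol
  have hAX : A = C * (of X)ᵀ := by
    ext i j
    exact (congrFun (hX j) i).symm
  have hRX : A.submatrix s id = A.submatrix s t * (of X)ᵀ := by
    conv_lhs => rw [hAX]
    exact submatrix_mul C _ s id id Function.bijective_id
  rw [hRX, Matrix.mul_assoc, nonsing_inv_mul_cancel_left _ _ hB]
  exact hAX

theorem submatrix_mul_mul_submatrix_of_mul_mul_eq {m n ι κ R : Type*} [Fintype m] [Fintype n]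
    [Semiring R] {A : Matrix m n R} {G : Matrix n m R} (hG : A * G * A = A)
    (s : ι → m) (t : κ → n) :
    A.submatrix s id * G * A.submatrix id t = A.submatrix s t := by
  conv_rhs => rw [← hG]
  rw [submatrix_mul _ _ s id t Function.bijective_id,
    submatrix_mul _ _ s id id Function.bijective_id]
  rfl

theorem transpose_mul_mul_eq_inv_of_mul_mul_eq {m ι K : Type*} [Fintype m] [Fintype ι]
    [DecidableEq ι] [Field K] {A G : Matrix m m K} (hA : Aᵀ = A) (hG : A * G * A = A)
    {s : ι → m} (hB : IsUnit (A.submatrix s s).det) :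
    (A.submatrix id s * (A.submatrix s s)⁻¹)ᵀ * G * (A.submatrix id s * (A.submatrix s s)⁻¹) =
      (A.submatrix s s)⁻¹ := by
  have hT : (A.submatrix id s)ᵀ = A.submatrix s id := by rw [transpose_submatrix, hA]
  have hBT : (A.submatrix s s)ᵀ = A.submatrix s s := by rw [transpose_submatrix, hA]
  rw [transpose_mul, transpose_nonsing_inv, hT, hBT]
  calc (A.submatrix s s)⁻¹ * A.submatrix s id * G * (A.submatrix id s * (A.submatrix s s)⁻¹)
      = (A.submatrix s s)⁻¹ * (A.submatrix s id * G * A.submatrix id s) * (A.submatrix s s)⁻¹ := by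
        simp only [Matrix.mul_assoc]
    _ = (A.submatrix s s)⁻¹ := by
        rw [submatrix_mul_mul_submatrix_of_mul_mul_eq hG, nonsing_inv_mul _ hB, Matrix.one_mul]

theorem dotProduct_mulVec_mulVec {m ι R : Type*} [Fintype m] [Fintype ι] [CommSemiring R]
    (K : Matrix m ι R) (G : Matrix m m R) (w : ι → R) :
    (K *ᵥ w) ⬝ᵥ G *ᵥ (K *ᵥ w) = w ⬝ᵥ (Kᵀ * G * K) *ᵥ w := by
  rw [← mulVec_mulVec, ← mulVec_mulVec, dotProduct_mulVec w, vecMul_transpose]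

theorem abs_dotProduct_mulVec_le_sum_abs {m n : Type*} [Fintype m] [Fintype n] {x : m → ℝ}
    {y : n → ℝ} (G : Matrix m n ℝ) (hx : ∀ i, |x i| ≤ 1) (hy : ∀ j, |y j| ≤ 1) :
    |x ⬝ᵥ G *ᵥ y| ≤ ∑ i, ∑ j, |G i j| := by
  calc |x ⬝ᵥ G *ᵥ y| = |∑ i, ∑ j, x i * G i j * y j| := by
        simp [dotProduct, mulVec, Finset.mul_sum, mul_assoc]
    _ ≤ ∑ i, |∑ j, x i * G i j * y j| := Finset.abs_sum_le_sum_abs _ _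
    _ ≤ ∑ i, ∑ j, |x i| * |G i j| * |y j| := by
        gcongr with i _
        simpa only [abs_mul] using
          Finset.abs_sum_le_sum_abs (fun j => x i * G i j * y j) Finset.univ
    _ ≤ ∑ i, ∑ j, 1 * |G i j| * 1 := by
        gcongr with i _ j _
        exacts [hx i, hy j]
    _ = ∑ i, ∑ j, |G i j| := by simp

end Matrix

theorem Fintype.sum_sum_eq_of_eq_zero_of_notMem_range {m ι M : Type*} [Fintype m] [Fintype ι]
    [AddCommMonoid M] {s : ι → m} (hs : Function.Injective s) (f : m → m → M)
    (hf : ∀ i j, i ∉ Set.range s ∨ j ∉ Set.range s → f i j = 0) :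
    ∑ i, ∑ j, f i j = ∑ k, ∑ l, f (s k) (s l) := by
  refine (Fintype.sum_of_injective s hs _ _ (fun i hi => ?_) fun k => ?_).symm
  · exact Finset.sum_eq_zero fun j _ => hf i j (Or.inl hi)
  · exact Fintype.sum_of_injective s hs _ _ (fun j hj => hf _ j (Or.inr hj)) fun l => rfl

-- No nonsingularity hypothesis is needed here or below: if `x * z = y * y`, both sides are `0`.
theorem inv_of_fin_two_symm (x y z : ℝ) :
    (!![x, y; y, z])⁻¹ = (x * z - y * y)⁻¹ • !![z, -y; -y, x] := by
  rw [inv_def, adjugate_fin_two_of, det_fin_two_of, Ring.inverse_eq_inv']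

theorem sum_abs_inv_of_fin_two_symm {x y z : ℝ} (hx : 0 ≤ x) (hy : 0 ≤ y) (hz : 0 ≤ z) :
    ∑ k, ∑ l, |(!![x, y; y, z])⁻¹ k l| = (x + 2 * y + z) / |x * z - y * y| := by
  simp [inv_of_fin_two_symm, Fin.sum_univ_two, abs_mul, abs_of_nonneg, hx, hy, hz]
  ring

theorem dotProduct_inv_mulVec_of_fin_two_symm (x y z : ℝ) :
    ![1, -1] ⬝ᵥ (!![x, y; y, z])⁻¹ *ᵥ ![1, -1] = (x + 2 * y + z) / (x * z - y * y) := by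
  simp [inv_of_fin_two_symm, dotProduct, Fin.sum_univ_two, mulVec]
  ring

theorem sum_abs_inv_eq_abs_dotProduct {x y z : ℝ} (hx : 0 ≤ x) (hy : 0 ≤ y) (hz : 0 ≤ z) :
    ∑ k, ∑ l, |(!![x, y; y, z])⁻¹ k l| = |![1, -1] ⬝ᵥ (!![x, y; y, z])⁻¹ *ᵥ ![1, -1]| := by
  rw [sum_abs_inv_of_fin_two_symm hx hy hz, dotProduct_inv_mulVec_of_fin_two_symm, abs_div,
    abs_of_nonneg (by positivity : 0 ≤ x + 2 * y + z)]

theorem submatrix_pair_of_transpose_eq {m R : Type*} {A : Matrix m m R} (hA : Aᵀ = A) (i j : m) :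
    A.submatrix ![i, j] ![i, j] = !![A i i, A i j; A i j, A j j] := by
  have : A j i = A i j := by rw [← transpose_apply A i j, hA]
  ext k l
  fin_cases k <;> fin_cases l <;> simp [this]

theorem sum_abs_inv_submatrix_pair {m : Type*} {A : Matrix m m ℝ} (hA : Aᵀ = A)
    (hnonneg : ∀ i j, 0 ≤ A i j) (i j : m) :
    ∑ k, ∑ l, |(A.submatrix ![i, j] ![i, j])⁻¹ k l| =
      (A i i + 2 * A i j + A j j) / |(A.submatrix ![i, j] ![i, j]).det| := by
  rw [submatrix_pair_of_transpose_eq hA, det_fin_two_of,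
    sum_abs_inv_of_fin_two_symm (hnonneg i i) (hnonneg i j) (hnonneg j j)]

/-- For `(u, v)` the coordinates of column `p` of `A` in the columns `i₁, i₂`, `h` is the
minimality of `{i₁, i₂}` against `{p, i₂}`; its right side is `A p p + 2 A p i₂ + A i₂ i₂`. -/
theorem sub_le_one_of_sq_mul_le {a b c u v : ℝ} (hb : 0 ≤ b) (hc : 0 ≤ c) (hd : a * c - b * b ≠ 0)
    (h₁ : 0 ≤ u * a + v * b) (h₂ : 0 ≤ u * b + v * c)
    (h : u ^ 2 * (a + 2 * b + c) ≤ u ^ 2 * a + 2 * u * (v + 1) * b + (v + 1) ^ 2 * c) :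
    u - v ≤ 1 := by
  by_contra! huv
  have hprod : 0 ≤ (v + 1 - u) * (2 * b * u + c * (u + v + 1)) := by linarith
  have hneg : 2 * b * u + c * (u + v + 1) ≤ 0 := nonpos_of_mul_nonneg_right hprod (by linarith)
  obtain rfl : c = 0 :=
    le_antisymm (nonpos_of_mul_nonpos_left (by linarith : c * (u - v + 1) ≤ 0) (by linarith)) hc
  have hb0 : 0 < b := lt_of_le_of_ne hb fun hb0 => hd (by rw [← hb0]; ring)
  obtain rfl : u = 0 := by nlinarith
  nlinarith

theorem abs_sub_le_one_of_sq_mul_le {a b c u v : ℝ} (ha : 0 ≤ a) (hb : 0 ≤ b) (hc : 0 ≤ c)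
    (hd : a * c - b * b ≠ 0) (h₁ : 0 ≤ u * a + v * b) (h₂ : 0 ≤ u * b + v * c)
    (hu : u ^ 2 * (a + 2 * b + c) ≤ u ^ 2 * a + 2 * u * (v + 1) * b + (v + 1) ^ 2 * c)
    (hv : v ^ 2 * (a + 2 * b + c) ≤ (u + 1) ^ 2 * a + 2 * (u + 1) * v * b + v ^ 2 * c) :
    |u - v| ≤ 1 := by
  refine abs_sub_le_iff.2 ⟨sub_le_one_of_sq_mul_le hb hc hd h₁ h₂ hu,
    sub_le_one_of_sq_mul_le hb ha (by rwa [mul_comm c]) (by linarith) (by linarith) ?_⟩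
  linarith

section MinimalPair

variable {m : Type*} {A : Matrix m m ℝ}

theorem sq_mul_le_of_minimal_pair (hA : Aᵀ = A) (hnonneg : ∀ i j, 0 ≤ A i j) {i₁ i₂ : m}
    (hdet : (A.submatrix ![i₁, i₂] ![i₁, i₂]).det ≠ 0)
    (hmin : ∀ j₁ j₂ : m, j₁ ≠ j₂ →
      (A.submatrix ![j₁, j₂] ![j₁, j₂]).det ≠ 0 →
      ∑ k, ∑ l, |(A.submatrix ![i₁, i₂] ![i₁, i₂])⁻¹ k l| ≤
        ∑ k, ∑ l, |(A.submatrix ![j₁, j₂] ![j₁, j₂])⁻¹ k l|)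
    {p q : m} {t : ℝ}
    (ht : (A.submatrix ![p, q] ![p, q]).det = t ^ 2 * (A.submatrix ![i₁, i₂] ![i₁, i₂]).det) :
    t ^ 2 * (A i₁ i₁ + 2 * A i₁ i₂ + A i₂ i₂) ≤ A p p + 2 * A p q + A q q := by
  rcases eq_or_ne t 0 with rfl | ht₀
  · linarith [hnonneg p p, hnonneg p q, hnonneg q q]
  have hdet' : (A.submatrix ![p, q] ![p, q]).det ≠ 0 := ht ▸ mul_ne_zero (pow_ne_zero 2 ht₀) hdet
  have hpq : p ≠ q := by
    rintro rfl
    apply hdet'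
    rw [submatrix_pair_of_transpose_eq hA, det_fin_two_of]
    ring
  have h := hmin p q hpq hdet'
  have hd : 0 < |(A.submatrix ![i₁, i₂] ![i₁, i₂]).det| := abs_pos.2 hdet
  rw [sum_abs_inv_submatrix_pair hA hnonneg, sum_abs_inv_submatrix_pair hA hnonneg, ht, abs_mul,
    abs_of_nonneg (sq_nonneg t), le_div_iff₀ (mul_pos (sq_pos_of_ne_zero ht₀) hd)] at h
  calc t ^ 2 * (A i₁ i₁ + 2 * A i₁ i₂ + A i₂ i₂)
      = (A i₁ i₁ + 2 * A i₁ i₂ + A i₂ i₂) / |(A.submatrix ![i₁, i₂] ![i₁, i₂]).det| *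
        (t ^ 2 * |(A.submatrix ![i₁, i₂] ![i₁, i₂]).det|) := by field_simp
    _ ≤ _ := h

theorem abs_mulVec_sub_le_one_of_minimal_pair [Fintype m] (hA : Aᵀ = A) (hnonneg : ∀ i j, 0 ≤ A i j)
    (hrank : A.rank = 2) {i₁ i₂ : m}
    (hdet : (A.submatrix ![i₁, i₂] ![i₁, i₂]).det ≠ 0)
    (hmin : ∀ j₁ j₂ : m, j₁ ≠ j₂ →
      (A.submatrix ![j₁, j₂] ![j₁, j₂]).det ≠ 0 →
      ∑ k, ∑ l, |(A.submatrix ![i₁, i₂] ![i₁, i₂])⁻¹ k l| ≤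
        ∑ k, ∑ l, |(A.submatrix ![j₁, j₂] ![j₁, j₂])⁻¹ k l|)
    (p : m) :
    |((A.submatrix id ![i₁, i₂] * (A.submatrix ![i₁, i₂] ![i₁, i₂])⁻¹) *ᵥ ![1, -1]) p| ≤ 1 := by
  set B := A.submatrix ![i₁, i₂] ![i₁, i₂]
  set K := A.submatrix id ![i₁, i₂] * B⁻¹
  have hsymm : ∀ i j, A j i = A i j := fun i j => by rw [← transpose_apply A i j, hA]
  have hKB : K * B = A.submatrix id ![i₁, i₂] := nonsing_inv_mul_cancel_right B _ hdet.isUnit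
  have hAK : A = K * A.submatrix ![i₁, i₂] id :=
    eq_submatrix_mul_inv_mul_submatrix_of_rank_eq A _ _ hdet.isUnit (by simpa using hrank)
  have hB : B = !![A i₁ i₁, A i₁ i₂; A i₁ i₂, A i₂ i₂] := submatrix_pair_of_transpose_eq hA i₁ i₂
  have hKw : (K *ᵥ ![1, -1]) p = K p 0 - K p 1 := by
    simp [mulVec, dotProduct, Fin.sum_univ_two, sub_eq_add_neg]
  rw [hKw]
  set u := K p 0
  set v := K p 1
  have hp₁ : A p i₁ = u * A i₁ i₁ + v * A i₁ i₂ := by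
    simpa [mul_apply, Fin.sum_univ_two, hB] using (congrFun₂ hKB p 0).symm
  have hp₂ : A p i₂ = u * A i₁ i₂ + v * A i₂ i₂ := by
    simpa [mul_apply, Fin.sum_univ_two, hB] using (congrFun₂ hKB p 1).symm
  have hpp : A p p = u * A p i₁ + v * A p i₂ := by
    have h := congrFun₂ hAK p p
    rw [mul_apply, Fin.sum_univ_two] at h
    simpa [hsymm p] using h
  have hdetB : B.det = A i₁ i₁ * A i₂ i₂ - A i₁ i₂ * A i₁ i₂ := by rw [hB, det_fin_two_of]
  have hu := sq_mul_le_of_minimal_pair hA hnonneg hdet hmin (p := p) (q := i₂) (t := u) (by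
    rw [submatrix_pair_of_transpose_eq hA, det_fin_two_of, hdetB, hpp, hp₁, hp₂]; ring)
  have hv := sq_mul_le_of_minimal_pair hA hnonneg hdet hmin (p := p) (q := i₁) (t := v) (by
    rw [submatrix_pair_of_transpose_eq hA, det_fin_two_of, hdetB, hpp, hp₁, hp₂]; ring)
  refine abs_sub_le_one_of_sq_mul_le (hnonneg i₁ i₁) (hnonneg i₁ i₂) (hnonneg i₂ i₂)
    (hdetB ▸ hdet) (hp₁ ▸ hnonneg p i₁) (hp₂ ▸ hnonneg p i₂) ?_ ?_
  · rw [hpp, hp₁, hp₂, hsymm] at hu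
    linarith
  · rw [hpp, hp₁, hp₂] at hv
    linarith

end MinimalPair

theorem rank_two_nonneg_symmetric_min_norm {n : ℕ}
    (A : Matrix (Fin n) (Fin n) ℝ) (hsym : Aᵀ = A)
    (hnonneg : ∀ i j, 0 ≤ A i j) (hrank : A.rank = 2)
    (i₁ i₂ : Fin n) (hne : i₁ ≠ i₂)
    (hdet : (A.submatrix ![i₁, i₂] ![i₁, i₂]).det ≠ 0)
    (hmin : ∀ j₁ j₂ : Fin n, j₁ ≠ j₂ →
      (A.submatrix ![j₁, j₂] ![j₁, j₂]).det ≠ 0 →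
      ∑ k, ∑ l, |(A.submatrix ![i₁, i₂] ![i₁, i₂])⁻¹ k l| ≤
        ∑ k, ∑ l, |(A.submatrix ![j₁, j₂] ![j₁, j₂])⁻¹ k l|)
    (H : Matrix (Fin n) (Fin n) ℝ)
    (hHblock : ∀ k l : Fin 2,
      H (![i₁, i₂] k) (![i₁, i₂] l) = (A.submatrix ![i₁, i₂] ![i₁, i₂])⁻¹ k l)
    (hHzero : ∀ i j : Fin n, (i ∉ ({i₁, i₂} : Set (Fin n)) ∨ j ∉ ({i₁, i₂} : Set (Fin n))) →
      H i j = 0) :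
    ∀ G : Matrix (Fin n) (Fin n) ℝ, Gᵀ = G → A * G * A = A →
      ∑ i, ∑ j, |H i j| ≤ ∑ i, ∑ j, |G i j| := by
  intro G _ hGA
  have hr := abs_mulVec_sub_le_one_of_minimal_pair hsym hnonneg hrank hdet hmin
  set B := A.submatrix ![i₁, i₂] ![i₁, i₂]
  set K := A.submatrix id ![i₁, i₂] * B⁻¹
  have hH : ∑ i, ∑ j, |H i j| = ∑ k, ∑ l, |B⁻¹ k l| := by
    rw [Fintype.sum_sum_eq_of_eq_zero_of_notMem_range (injective_pair_iff_ne.2 hne) _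
      fun i j hij => by rw [hHzero i j (by rwa [range_cons_cons_empty] at hij), abs_zero]]
    simp only [hHblock]
  calc ∑ i, ∑ j, |H i j| = ∑ k, ∑ l, |B⁻¹ k l| := hH
    _ = |![1, -1] ⬝ᵥ B⁻¹ *ᵥ ![1, -1]| := by
        rw [show B = _ from submatrix_pair_of_transpose_eq hsym i₁ i₂]
        exact sum_abs_inv_eq_abs_dotProduct (hnonneg _ _) (hnonneg _ _) (hnonneg _ _)
    _ = |(K *ᵥ ![1, -1]) ⬝ᵥ G *ᵥ (K *ᵥ ![1, -1])| := by
        rw [dotProduct_mulVec_mulVec, transpose_mul_mul_eq_inv_of_mul_mul_eq hsym hGA hdet.isUnit]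
    _ ≤ ∑ i, ∑ j, |G i j| := abs_dotProduct_mulVec_le_sum_abs G hr hr
end

section
/- Let A ∈ ℝ^{m×n} have rank 1. Choose a nonzero column â = A e_j minimizing ‖â⁺‖₁ = ‖â‖₁/(âᵀâ) over all nonzero columns of A. Let H be the n×m matrix whose row j equals â⁺ = (1/(âᵀâ)) âᵀ and all other rows zero. Then AHA = A, AH is symmetric, HAH = H, and for every G with AGA = A and (AG)ᵀ = AG, ‖H‖₁ ≤ ‖G‖₁. -/
open Matrix

theorem rank_one_ah_symmetric_min_norm {m n : ℕ}
    (A : Matrix (Fin m) (Fin n) ℝ) (hrank : A.rank = 1)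
    (j : Fin n) (hcol : (fun i => A i j) ≠ 0)
    (hmin : ∀ j' : Fin n, (fun i => A i j') ≠ 0 →
      (∑ i, |A i j|) / (∑ i, (A i j) ^ 2) ≤ (∑ i, |A i j'|) / (∑ i, (A i j') ^ 2))
    (H : Matrix (Fin n) (Fin m) ℝ)
    (hHrow : ∀ i : Fin m, H j i = A i j / (∑ i', (A i' j) ^ 2))
    (hHzero : ∀ k : Fin n, k ≠ j → ∀ i : Fin m, H k i = 0) :
    A * H * A = A ∧ (A * H)ᵀ = A * H ∧ H * A * H = H ∧
      ∀ G : Matrix (Fin n) (Fin m) ℝ, A * G * A = A → (A * G)ᵀ = A * G →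
        ∑ k, ∑ i, |H k i| ≤ ∑ k, ∑ i, |G k i| := by
  classical
  obtain ⟨i0, hi0⟩ : ∃ i, A i j ≠ 0 := by
    by_contra h; push_neg at h; exact hcol (funext h)
  set s : ℝ := ∑ i, (A i j) ^ 2 with hs_def
  have hs : 0 < s :=
    Finset.sum_pos' (fun i _ => sq_nonneg _) ⟨i0, Finset.mem_univ _, by positivity⟩
  -- every column is a multiple of column j
  have hcolmem : ∀ k, (fun i => A i k) ∈ LinearMap.range A.mulVecLin := fun k =>
    ⟨Pi.single k 1, by ext i; simp [Matrix.mulVecLin_apply, Matrix.mulVec_single]⟩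
  have hspan : Submodule.span ℝ {(fun i => A i j : Fin m → ℝ)} = LinearMap.range A.mulVecLin := by
    apply Submodule.eq_of_le_of_finrank_le
    · rw [Submodule.span_le, Set.singleton_subset_iff]
      exact hcolmem j
    · rw [finrank_span_singleton hcol]
      exact le_of_eq hrank
  have ht : ∀ k, ∃ c : ℝ, ∀ i, A i k = c * A i j := by
    intro k
    have hk := hcolmem k
    rw [← hspan, Submodule.mem_span_singleton] at hk
    obtain ⟨c, hc⟩ := hk
    exact ⟨c, fun i => by have := congrFun hc i; simpa using this.symm⟩
  choose t ht using ht
  have htj : t j = 1 := by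
    have h := ht j i0
    have : t j * A i0 j = 1 * A i0 j := by rw [one_mul]; exact h.symm
    exact mul_right_cancel₀ hi0 this
  -- A*H entries
  have hAH : ∀ i i', (A * H) i i' = A i j * A i' j / s := by
    intro i i'
    rw [Matrix.mul_apply]
    rw [Finset.sum_eq_single j (fun k _ hk => by rw [hHzero k hk i', mul_zero])
      (fun h => absurd (Finset.mem_univ j) h)]
    rw [hHrow i']
    ring
  have h1 : A * H * A = A := by
    ext i k
    rw [Matrix.mul_apply]
    have : ∀ i', (A * H) i i' * A i' k = A i j * t k / s * (A i' j)^2 := by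
      intro i'
      rw [hAH, ht k i']; ring
    rw [Finset.sum_congr rfl (fun i' _ => this i'), ← Finset.mul_sum, ← hs_def, ht k i]
    field_simp
  have h2 : (A * H)ᵀ = A * H := by
    ext i i'
    rw [Matrix.transpose_apply, hAH, hAH]
    ring
  have h3 : H * A * H = H := by
    rw [Matrix.mul_assoc]
    ext k i'
    rw [Matrix.mul_apply]
    by_cases hk : k = j
    · rw [hk]
      have e : ∀ i, H j i * (A * H) i i' = (A i' j / s / s) * (A i j)^2 := by
        intro i
        rw [hHrow i, hAH]; ring
      rw [Finset.sum_congr rfl (fun i _ => e i), ← Finset.mul_sum, ← hs_def, hHrow i']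
      field_simp
    · rw [hHzero k hk i']
      exact Finset.sum_eq_zero fun i _ => by rw [hHzero k hk i, zero_mul]
  refine ⟨h1, h2, h3, ?_⟩
  intro G hG1 hG2
  set w : Fin m → ℝ := fun i' => ∑ k, t k * G k i' with hw_def
  have hAG : ∀ i i', (A * G) i i' = A i j * w i' := by
    intro i i'
    rw [Matrix.mul_apply, hw_def, Finset.mul_sum]
    exact Finset.sum_congr rfl fun k _ => by rw [ht k i]; ring
  -- ∑ w i' * A i' j = 1
  have hwa : ∑ i', w i' * A i' j = 1 := by
    have := congrFun (congrFun hG1 i0) j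
    rw [Matrix.mul_apply] at this
    have e : ∀ i', (A * G) i0 i' * A i' j = A i0 j * (w i' * A i' j) := by
      intro i'; rw [hAG]; ring
    rw [Finset.sum_congr rfl (fun i' _ => e i'), ← Finset.mul_sum] at this
    exact mul_left_cancel₀ hi0 (this.trans (mul_one _).symm)
  -- symmetry gives w = a / s
  have hsym : ∀ i i', A i j * w i' = A i' j * w i := by
    intro i i'
    have := congrFun (congrFun hG2 i') i
    rw [Matrix.transpose_apply, hAG, hAG] at this
    exact this
  have hw : ∀ i', w i' = A i' j / s := by
    intro i'
    have : s * w i' = A i' j := by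
      calc s * w i' = ∑ i, A i j * (A i j * w i') := by
            rw [hs_def, Finset.sum_mul]
            exact Finset.sum_congr rfl fun i _ => by ring
        _ = ∑ i, A i j * (A i' j * w i) := Finset.sum_congr rfl fun i _ => by rw [hsym i i']
        _ = A i' j * ∑ i, w i * A i j := by rw [Finset.mul_sum]; exact Finset.sum_congr rfl fun i _ => by ring
        _ = A i' j := by rw [hwa, mul_one]
    field_simp [ne_of_gt hs] at this ⊢
    linarith [this]
  -- |t k| ≤ 1
  have hLa : 0 < ∑ i, |A i j| :=
    Finset.sum_pos' (fun i _ => abs_nonneg _) ⟨i0, Finset.mem_univ _, abs_pos.mpr hi0⟩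
  have htle : ∀ k, |t k| ≤ 1 := by
    intro k
    rcases eq_or_ne (t k) 0 with h | h
    · rw [h]; simp
    · have hkcol : (fun i => A i k) ≠ 0 := by
        intro hzero
        have := congrFun hzero i0
        rw [ht k i0] at this
        exact hi0 (by
          rcases mul_eq_zero.mp this with h' | h'
          · exact absurd h' h
          · exact h')
      have hm := hmin k hkcol
      have e1 : (∑ i, |A i k|) = |t k| * ∑ i, |A i j| := by
        rw [Finset.mul_sum]
        exact Finset.sum_congr rfl fun i _ => by rw [ht k i, abs_mul]
      have e2 : (∑ i, (A i k)^2) = (t k)^2 * s := by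
        rw [hs_def, Finset.mul_sum]
        exact Finset.sum_congr rfl fun i _ => by rw [ht k i]; ring
      rw [e1, e2] at hm
      have habs : 0 < |t k| := abs_pos.mpr h
      have h2' : |t k| * (∑ i, |A i j|) / ((t k)^2 * s) = (∑ i, |A i j|) / (|t k| * s) := by
        field_simp
        rw [← sq_abs (t k)]
      rw [h2'] at hm
      rw [div_le_div_iff₀ hs (by positivity)] at hm
      nlinarith [mul_pos hLa hs]
  -- final estimate
  have hLHS : ∑ k, ∑ i, |H k i| = (∑ i, |A i j|) / s := by
    rw [Finset.sum_eq_single j (fun k _ hk => Finset.sum_eq_zero fun i _ => by rw [hHzero k hk i, abs_zero]) (fun h => absurd (Finset.mem_univ j) h)]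
    rw [Finset.sum_div]
    exact Finset.sum_congr rfl fun i _ => by rw [hHrow i, abs_div, abs_of_pos hs]
  rw [hLHS]
  calc (∑ i, |A i j|) / s = ∑ i, |w i| := by
        rw [Finset.sum_div]
        exact (Finset.sum_congr rfl fun i _ => by rw [hw i, abs_div, abs_of_pos hs]).symm
    _ ≤ ∑ i, ∑ k, |t k| * |G k i| := by
        apply Finset.sum_le_sum
        intro i _
        rw [hw_def]
        calc |∑ k, t k * G k i| ≤ ∑ k, |t k * G k i| := Finset.abs_sum_le_sum_abs _ _
          _ = ∑ k, |t k| * |G k i| := Finset.sum_congr rfl fun k _ => abs_mul _ _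
    _ ≤ ∑ i, ∑ k, |G k i| := by
        apply Finset.sum_le_sum; intro i _
        apply Finset.sum_le_sum; intro k _
        calc |t k| * |G k i| ≤ 1 * |G k i| := mul_le_mul_of_nonneg_right (htle k) (abs_nonneg _)
          _ = |G k i| := one_mul _
    _ = ∑ k, ∑ i, |G k i| := Finset.sum_comm
end

section
/- Let â ∈ ℝ^m be nonzero with â_i ≠ 0, set z := sign(â⁺) ∈ ℝ^m (row vector), define w := (1/â_i) z (â⁺)ᵀ and the skew-symmetric matrix U supported on row/column i by u_{ki} = −u_{ik} := (1/â_i)(â_k z (â⁺)ᵀ − z_k) for k ≠ i. Then â_i w âᵀ + âᵀ U = z. -/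
open Matrix

theorem rank_one_dual_certificate {m : ℕ}
    (a : Fin m → ℝ) (ha : a ≠ 0) (i : Fin m) (hi : a i ≠ 0)
    (apinv z : Fin m → ℝ)
    (hapinv : apinv = fun k => a k / (∑ l, (a l) ^ 2))
    (hz : z = fun k => Real.sign (apinv k))
    (w : ℝ) (hw : w = (1 / a i) * (∑ k, z k * apinv k))
    (U : Matrix (Fin m) (Fin m) ℝ) (hskew : Uᵀ = -U)
    (hUki : ∀ k, k ≠ i → U k i = (1 / a i) * (a k * (∑ l, z l * apinv l) - z k))
    (hUzero : ∀ k l, k ≠ i → l ≠ i → U k l = 0) :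
    ∀ k, a i * w * a k + (∑ l, a l * U l k) = z k := by
  intro k
  set A : ℝ := ∑ l, (a l) ^ 2 with hA
  have hApos : 0 < A := by
    apply Finset.sum_pos' (fun l _ => sq_nonneg _)
    exact ⟨i, Finset.mem_univ i, by positivity⟩
  set S : ℝ := ∑ l, z l * apinv l with hS
  set T : ℝ := ∑ l, z l * a l with hT
  have hST : S = T / A := by
    rw [hS, hT, hapinv, Finset.sum_div]
    exact Finset.sum_congr rfl fun l _ => by ring
  have hUii : U i i = 0 := by
    have := congrFun (congrFun hskew i) i
    simp only [Matrix.transpose_apply, Matrix.neg_apply] at this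
    linarith
  by_cases hk : k = i
  · subst hk
    have hsum : (∑ l, a l * U l k) =
        a k * U k k + ∑ l ∈ Finset.univ \ {k}, a l * U l k :=
      (Finset.sum_eq_add_sum_sdiff_singleton_of_mem (Finset.mem_univ k) _)
    rw [hsum, hUii, mul_zero, zero_add]
    have hrest : ∑ l ∈ Finset.univ \ {k}, a l * U l k =
        ∑ l ∈ Finset.univ \ {k}, (1 / a k) * (a l ^ 2 * S - a l * z l) := by
      refine Finset.sum_congr rfl fun l hl => ?_
      have hl' : l ≠ k := by simpa using (Finset.mem_sdiff.mp hl).2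
      rw [hUki l hl']
      ring
    rw [hrest, ← Finset.mul_sum]
    have h1 : ∑ l ∈ Finset.univ \ {k}, (a l ^ 2 * S - a l * z l) =
        (∑ l, (a l ^ 2 * S - a l * z l)) - (a k ^ 2 * S - a k * z k) := by
      have := Finset.sum_eq_add_sum_sdiff_singleton_of_mem (Finset.mem_univ k)
        (fun l => a l ^ 2 * S - a l * z l)
      linarith
    have h2 : (∑ l, (a l ^ 2 * S - a l * z l)) = A * S - T := by
      rw [Finset.sum_sub_distrib, ← Finset.sum_mul, hA, hT]
      congr 1
      exact Finset.sum_congr rfl fun l _ => by ring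
    rw [h1, h2, hST, hw, hST]
    field_simp
    ring
  · have hsum : (∑ l, a l * U l k) =
        a i * U i k + ∑ l ∈ Finset.univ \ {i}, a l * U l k :=
      (Finset.sum_eq_add_sum_sdiff_singleton_of_mem (Finset.mem_univ i) _)
    have hrest : ∑ l ∈ Finset.univ \ {i}, a l * U l k = 0 := by
      apply Finset.sum_eq_zero
      intro l hl
      have hl' : l ≠ i := by simpa using (Finset.mem_sdiff.mp hl).2
      rw [hUzero l k hl' hk, mul_zero]
    have hUik : U i k = -((1 / a i) * (a k * S - z k)) := by
      have h := congrFun (congrFun hskew k) i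
      simp only [Matrix.transpose_apply, Matrix.neg_apply] at h
      rw [h, hUki k hk]
    rw [hsum, hrest, add_zero, hUik, hw]
    field_simp
    ring
end

section
/- Let A ∈ ℝ^{m×n} have rank r, T a set of r column indices with Â := A[:,T] of rank r, and Z := sign(Â⁺) entrywise. Then there exist W ∈ ℝ^{m×n} and a skew-symmetric U ∈ ℝ^{m×m} such that ÂᵀWAᵀ + ÂᵀU = Z and ⟨A, W⟩ = ‖Â⁺‖₁. -/
/-!
Let `P = Â⁺`, so that `P Â = 1` and `Âᵀ Â P = Âᵀ`, and let `S` select the columns `T`, so that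
`A S = Â`. The certificate is `W = Pᵀ Z Pᵀ Sᵀ`: then `Âᵀ W Aᵀ = Z (Â P)ᵀ`, and
`⟨A, W⟩ = tr (Z Pᵀ) = ⟨Z, P⟩ = ‖P‖₁` because `Z` is the sign pattern of `P`. The remainder
`Z (1 - Â P)ᵀ` equals `Âᵀ U` for the skew-symmetric `U = X - Xᵀ` with `X = Pᵀ Z (1 - Â P)ᵀ`,
since `Âᵀ Xᵀ = (Âᵀ - Âᵀ Â P) Zᵀ P = 0`.
-/

open Matrix

theorem Real.sign_mul_self_eq_abs (x : ℝ) : Real.sign x * x = |x| := by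
  rcases lt_trichotomy x 0 with h | rfl | h
  · rw [Real.sign_of_neg h, abs_of_neg h, neg_one_mul]
  · simp
  · rw [Real.sign_of_pos h, abs_of_pos h, one_mul]

namespace Matrix

variable {m n ι R K : Type*} [Fintype m] [Fintype n] [Fintype ι]

theorem isUnit_of_rank_eq_card [DecidableEq n] [Field K] {M : Matrix n n K}
    (h : M.rank = Fintype.card n) : IsUnit M := by
  rw [← mulVec_injective_iff_isUnit]
  have hrange : LinearMap.range M.mulVecLin = ⊤ :=
    Submodule.eq_top_of_finrank_eq (by rw [← rank, h, Module.finrank_fintype_fun_eq_card])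
  exact LinearMap.injective_iff_surjective.mpr (LinearMap.range_eq_top.mp hrange)

section LeftInverse

variable [CommRing R] [DecidableEq ι]

theorem inv_transpose_mul_self_mul_transpose_mul_self {B : Matrix m ι R}
    (h : IsUnit (Bᵀ * B)) : (Bᵀ * B)⁻¹ * Bᵀ * B = 1 := by
  rw [Matrix.mul_assoc, nonsing_inv_mul _ ((isUnit_iff_isUnit_det _).mp h)]

theorem transpose_mul_self_mul_inv_transpose_mul_self_mul_transpose {B : Matrix m ι R}
    (h : IsUnit (Bᵀ * B)) : Bᵀ * B * ((Bᵀ * B)⁻¹ * Bᵀ) = Bᵀ := by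
  rw [← Matrix.mul_assoc, mul_nonsing_inv _ ((isUnit_iff_isUnit_det _).mp h), Matrix.one_mul]

theorem exists_skew_transpose_mul_eq [DecidableEq m] {B : Matrix m ι R} {P : Matrix ι m R}
    (hP : P * B = 1) (hBP : Bᵀ * B * P = Bᵀ) (Z : Matrix ι m R) :
    ∃ U : Matrix m m R, Uᵀ = -U ∧ Bᵀ * U = Z * (1 - (B * P)ᵀ) := by
  set X := Pᵀ * Z * (1 - (B * P)ᵀ)
  have hX : Bᵀ * X = Z * (1 - (B * P)ᵀ) := by
    rw [← Matrix.mul_assoc, ← Matrix.mul_assoc, ← transpose_mul, hP, transpose_one,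
      Matrix.one_mul]
  have hXt : Bᵀ * Xᵀ = 0 := by
    simp only [X, transpose_mul, transpose_sub, transpose_transpose,
      ← Matrix.mul_assoc, Matrix.mul_sub, Matrix.mul_one, hBP, sub_self]
  refine ⟨X - Xᵀ, by rw [transpose_sub, transpose_transpose, neg_sub], ?_⟩
  rw [Matrix.mul_sub, hX, hXt, sub_zero]

theorem exists_transpose_submatrix_mul_mul_transpose_eq [DecidableEq n] (A : Matrix m n R)
    (f : ι → n) {P : Matrix ι m R} (hP : P * A.submatrix id f = 1) (Z : Matrix ι m R) :
    ∃ W : Matrix m n R, (A.submatrix id f)ᵀ * W * Aᵀ = Z * (A.submatrix id f * P)ᵀ ∧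
      ∑ i, ∑ j, A i j * W i j = ∑ k, ∑ i, Z k i * P k i := by
  have hsel : (1 : Matrix n n R).submatrix f id * Aᵀ = (A.submatrix id f)ᵀ := by
    simpa using one_submatrix_mul f (Equiv.refl n) Aᵀ
  have hPt : (A.submatrix id f)ᵀ * Pᵀ = 1 := by rw [← transpose_mul, hP, transpose_one]
  refine ⟨Pᵀ * Z * Pᵀ * (1 : Matrix n n R).submatrix f id, ?_, ?_⟩
  · simp only [Matrix.mul_assoc, hsel]
    rw [← Matrix.mul_assoc, hPt, Matrix.one_mul, transpose_mul]
  · calc ∑ i, ∑ j, A i j * (Pᵀ * Z * Pᵀ * (1 : Matrix n n R).submatrix f id) i j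
        = trace (A * (Pᵀ * Z * Pᵀ * (1 : Matrix n n R).submatrix f id)ᵀ) := sum_hadamard_eq _ _
      _ = trace ((A.submatrix id f)ᵀ * (Pᵀ * Z * Pᵀ)) := by
        rw [← trace_transpose, transpose_mul, transpose_transpose, Matrix.mul_assoc, hsel,
          trace_mul_comm]
      _ = trace (Z * Pᵀ) := by rw [← Matrix.mul_assoc, ← Matrix.mul_assoc, hPt, Matrix.one_mul]
      _ = ∑ k, ∑ i, Z k i * P k i := (sum_hadamard_eq _ _).symm

theorem exists_dual_certificate [DecidableEq m] [DecidableEq n]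
    (A : Matrix m n R) (f : ι → n) {P : Matrix ι m R} (hP : P * A.submatrix id f = 1)
    (hAP : (A.submatrix id f)ᵀ * A.submatrix id f * P = (A.submatrix id f)ᵀ)
    (Z : Matrix ι m R) :
    ∃ (W : Matrix m n R) (U : Matrix m m R), Uᵀ = -U ∧
      (A.submatrix id f)ᵀ * W * Aᵀ + (A.submatrix id f)ᵀ * U = Z ∧
      ∑ i, ∑ j, A i j * W i j = ∑ k, ∑ i, Z k i * P k i := by
  obtain ⟨W, hW, hsum⟩ := exists_transpose_submatrix_mul_mul_transpose_eq A f hP Z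
  obtain ⟨U, hU, hAU⟩ := exists_skew_transpose_mul_eq hP hAP Z
  refine ⟨W, U, hU, ?_, hsum⟩
  rw [hW, hAU, Matrix.mul_sub, Matrix.mul_one, add_sub_cancel]

end LeftInverse

end Matrix

theorem dual_certificate_exists_general {m n r : ℕ}
    (A : Matrix (Fin m) (Fin n) ℝ)
    (f : Fin r → Fin n)
    (hAhat : (A.submatrix id f).rank = r)
    (Apinv : Matrix (Fin r) (Fin m) ℝ)
    (hApinv : Apinv = ((A.submatrix id f)ᵀ * (A.submatrix id f))⁻¹ * (A.submatrix id f)ᵀ)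
    (Z : Matrix (Fin r) (Fin m) ℝ)
    (hZ : ∀ k j, Z k j = Real.sign (Apinv k j)) :
    ∃ (W : Matrix (Fin m) (Fin n) ℝ) (U : Matrix (Fin m) (Fin m) ℝ),
      Uᵀ = -U ∧
      (A.submatrix id f)ᵀ * W * Aᵀ + (A.submatrix id f)ᵀ * U = Z ∧
      ∑ i, ∑ j, A i j * W i j = ∑ k, ∑ j, |Apinv k j| := by
  have hunit : IsUnit ((A.submatrix id f)ᵀ * A.submatrix id f) :=
    isUnit_of_rank_eq_card (by rw [rank_transpose_mul_self, hAhat, Fintype.card_fin])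
  subst hApinv
  obtain ⟨W, U, hU, hWU, hsum⟩ := exists_dual_certificate A f
    (inv_transpose_mul_self_mul_transpose_mul_self hunit)
    (transpose_mul_self_mul_inv_transpose_mul_self_mul_transpose hunit) Z
  refine ⟨W, U, hU, hWU, hsum.trans ?_⟩
  simp only [hZ, Real.sign_mul_self_eq_abs]

theorem dual_certificate_exists {m n r : ℕ}
    (A : Matrix (Fin m) (Fin n) ℝ) (hrank : A.rank = r)
    (f : Fin r → Fin n) (hf : Function.Injective f)
    (hAhat : (A.submatrix id f).rank = r)
    (Apinv : Matrix (Fin r) (Fin m) ℝ)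
    (hApinv : Apinv = ((A.submatrix id f)ᵀ * (A.submatrix id f))⁻¹ * (A.submatrix id f)ᵀ)
    (Z : Matrix (Fin r) (Fin m) ℝ)
    (hZ : ∀ k j, Z k j = Real.sign (Apinv k j)) :
    ∃ (W : Matrix (Fin m) (Fin n) ℝ) (U : Matrix (Fin m) (Fin m) ℝ),
      Uᵀ = -U ∧
      (A.submatrix id f)ᵀ * W * Aᵀ + (A.submatrix id f)ᵀ * U = Z ∧
      ∑ i, ∑ j, A i j * W i j = ∑ k, ∑ j, |Apinv k j| :=
  dual_certificate_exists_general A f hAhat Apinv hApinv Z hZ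
end

section
/- Let â₁, â₂ ∈ ℝ^m be linearly independent, Â := [â₁ â₂], and b̂ := α â₁ + β â₂ with α ≠ 0. Let Â_{b/1} := [b̂ â₂]. If ‖Â⁺‖₁ ≤ ‖Â_{b/1}⁺‖₁ then |α| − |β| ≤ 1. -/
/-!
Writing `Â_{b/1} = Â C` with `C = !![α, 0; β, 1]` gives `Â_{b/1}⁺ = C⁻¹ Â⁺`: the first row of
`Â⁺` is scaled by `1/α` and the second row picks up `-(β/α)` times the first. By the triangle
inequality `‖Â_{b/1}⁺‖₁ ≤ (1 + |β|)/|α| · r₀ + r₁`, where `r₀, r₁` are the 1-norms of the rows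
of `Â⁺`, while `‖Â⁺‖₁ = r₀ + r₁`. Since `Â⁺ Â = 1`, the first row of `Â⁺` is nonzero, so `r₀ > 0`
and comparing the two bounds gives `|α| ≤ 1 + |β|`.
-/

open Matrix

/-- Moore–Penrose pseudoinverse of a full-column-rank `m × 2` matrix. -/
noncomputable def pinv2 {m : ℕ} (B : Matrix (Fin m) (Fin 2) ℝ) : Matrix (Fin 2) (Fin m) ℝ :=
  (Bᵀ * B)⁻¹ * Bᵀ

section PseudoInverse

variable {m : ℕ}

theorem pinv2_mul_self {B : Matrix (Fin m) (Fin 2) ℝ} (hB : LinearIndependent ℝ B.col) :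
    pinv2 B * B = 1 := by
  have hGram : IsUnit (Bᵀ * B) := by
    simpa using (PosDef.conjTranspose_mul_self B (mulVec_injective_iff.2 hB)).isUnit
  rw [pinv2, Matrix.mul_assoc, nonsing_inv_mul _ ((isUnit_iff_isUnit_det _).1 hGram)]

theorem pinv2_mul_of_isUnit (B : Matrix (Fin m) (Fin 2) ℝ) {C : Matrix (Fin 2) (Fin 2) ℝ}
    (hC : IsUnit C) : pinv2 (B * C) = C⁻¹ * pinv2 B := by
  have hCt : IsUnit Cᵀ.det := by rwa [det_transpose, ← isUnit_iff_isUnit_det]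
  calc pinv2 (B * C) = (Cᵀ * (Bᵀ * B) * C)⁻¹ * (Cᵀ * Bᵀ) := by
        simp only [pinv2, transpose_mul, Matrix.mul_assoc]
    _ = C⁻¹ * (Bᵀ * B)⁻¹ * ((Cᵀ)⁻¹ * Cᵀ) * Bᵀ := by
        rw [Matrix.mul_inv_rev, Matrix.mul_inv_rev]
        simp only [Matrix.mul_assoc]
    _ = C⁻¹ * pinv2 B := by
        rw [nonsing_inv_mul _ hCt, Matrix.mul_one, pinv2, Matrix.mul_assoc]

end PseudoInverse

theorem sum_abs_row_pos_of_mul_eq_one {n l : Type*} [Fintype n] [Fintype l] [DecidableEq n]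
    {P : Matrix n l ℝ} {B : Matrix l n ℝ} (h : P * B = 1) (k : n) :
    0 < ∑ j, |P k j| := by
  refine (Finset.sum_nonneg fun j _ => abs_nonneg (P k j)).lt_of_ne fun hzero => ?_
  have hrow : ∀ j, P k j = 0 := fun j => abs_eq_zero.1 <|
    (Finset.sum_eq_zero_iff_of_nonneg fun j _ => abs_nonneg (P k j)).1 hzero.symm j
      (Finset.mem_univ j)
  simpa [mul_apply, hrow] using congrFun (congrFun h k) k

theorem inv_lowerTriangular_fin_two {α : ℝ} (hα : α ≠ 0) (β : ℝ) :
    !![α, 0; β, 1]⁻¹ = !![α⁻¹, 0; -(β * α⁻¹), 1] := by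
  refine inv_eq_right_inv ?_
  ext i j
  fin_cases i <;> fin_cases j <;> simp [hα]

theorem sum_abs_lowerTriangular_mul_le {n : Type*} [Fintype n] (P : Matrix (Fin 2) n ℝ)
    (α β : ℝ) :
    ∑ k, ∑ j, |(!![α⁻¹, 0; -(β * α⁻¹), 1] * P) k j|
      ≤ (1 + |β|) / |α| * ∑ j, |P 0 j| + ∑ j, |P 1 j| := by
  have hentry : ∀ j, |(!![α⁻¹, 0; -(β * α⁻¹), 1] * P) 0 j|
      + |(!![α⁻¹, 0; -(β * α⁻¹), 1] * P) 1 j| ≤ (1 + |β|) / |α| * |P 0 j| + |P 1 j| := by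
    intro j
    simp only [mul_apply, Fin.sum_univ_two, of_apply, cons_val', cons_val_zero, cons_val_one,
      empty_val', cons_val_fin_one, zero_mul, add_zero, one_mul]
    have htri := abs_add_le (-(β * α⁻¹) * P 0 j) (P 1 j)
    simp only [abs_mul, abs_neg, abs_inv] at htri ⊢
    have : (1 + |β|) / |α| * |P 0 j| = |α|⁻¹ * |P 0 j| + |β| * |α|⁻¹ * |P 0 j| := by ring
    linarith
  rw [Fin.sum_univ_two, ← Finset.sum_add_distrib, Finset.mul_sum, ← Finset.sum_add_distrib]
  exact Finset.sum_le_sum fun j _ => hentry j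

theorem abs_sub_abs_le_one_of_rowSum_le {α β r₀ r₁ : ℝ} (hα : α ≠ 0) (hr₀ : 0 < r₀)
    (h : r₀ + r₁ ≤ (1 + |β|) / |α| * r₀ + r₁) : |α| - |β| ≤ 1 := by
  have h1 : 1 ≤ (1 + |β|) / |α| := le_of_mul_le_mul_right (by linarith) hr₀
  rw [le_div_iff₀ (abs_pos.2 hα)] at h1
  linarith

theorem rank_two_column_exchange_bound {m : ℕ}
    (a1 a2 : Fin m → ℝ) (hli : LinearIndependent ℝ ![a1, a2])
    (α β : ℝ) (hα : α ≠ 0)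
    (b : Fin m → ℝ) (hb : b = α • a1 + β • a2)
    (Ahat Ab1 : Matrix (Fin m) (Fin 2) ℝ)
    (hAhat : Ahat = Matrix.of fun i k => ![a1, a2] k i)
    (hAb1 : Ab1 = Matrix.of fun i k => ![b, a2] k i)
    (hmin : ∑ k, ∑ j, |pinv2 Ahat k j| ≤ ∑ k, ∑ j, |pinv2 Ab1 k j|) :
    |α| - |β| ≤ 1 := by
  have hcols : LinearIndependent ℝ Ahat.col := by
    convert hli
    ext k i
    fin_cases k <;> simp [hAhat]
  have hexchange : Ab1 = Ahat * !![α, 0; β, 1] := by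
    ext i k
    fin_cases k <;> simp [hAb1, hAhat, hb, mul_apply, Fin.sum_univ_two, mul_comm]
  have hC : IsUnit !![α, 0; β, 1] := by
    rw [isUnit_iff_isUnit_det, det_fin_two_of]
    simpa using hα
  rw [hexchange, pinv2_mul_of_isUnit _ hC, inv_lowerTriangular_fin_two hα,
    Fin.sum_univ_two (fun k => ∑ j, |pinv2 Ahat k j|)] at hmin
  exact abs_sub_abs_le_one_of_rowSum_le hα
    (sum_abs_row_pos_of_mul_eq_one (pinv2_mul_self hcols) 0)
    (hmin.trans (sum_abs_lowerTriangular_mul_le _ α β))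
end
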